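/- Let a, b > 0 and let y : [0,T] → ℝ be differentiable with y(0) = y₀ ≥ 0 and y'(t) ≤ a·y(t)² + b for all t ∈ [0,T]. If T < (ab)^{-1/2} · arctan((b/a)^{1/2} / y₀) (with the convention that this bound is (ab)^{-1/2}·(π/2) when y₀ = 0), then for all t ∈ [0,T], y(t) ≤ (y₀ + (b/a)^{1/2} tan((ab)^{1/2} t)) / (1 − (a/b)^{1/2} y₀ tan((ab)^{1/2} t)). -/
import Mathlib

open Real Set

private lemma tan_add_aux {x z : ℝ} (hx : Real.cos x ≠ 0) (hz : Real.cos z ≠ 0)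
    (hxz : Real.cos (x + z) ≠ 0) :
    Real.tan (x + z) = (Real.tan x + Real.tan z) / (1 - Real.tan x * Real.tan z) := by
  have h : Real.cos x * Real.cos z - Real.sin x * Real.sin z ≠ 0 := by
    rw [← Real.cos_add]; exact hxz
  rw [Real.tan_eq_sin_div_cos, Real.tan_eq_sin_div_cos, Real.tan_eq_sin_div_cos,
    Real.sin_add, Real.cos_add]
  field_simp

theorem riccati_inequality_bound
    (a b T y₀ : ℝ) (ha : 0 < a) (hb : 0 < b) (hy₀ : 0 ≤ y₀)
    (y y' : ℝ → ℝ)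
    (hderiv : ∀ t ∈ Icc (0:ℝ) T, HasDerivAt y (y' t) t)
    (hineq : ∀ t ∈ Icc (0:ℝ) T, y' t ≤ a * (y t) ^ 2 + b)
    (hinit : y 0 = y₀)
    (hT : T < (Real.sqrt (a * b))⁻¹ *
      (if y₀ = 0 then Real.pi / 2 else Real.arctan (Real.sqrt (b / a) / y₀))) :
    ∀ t ∈ Icc (0:ℝ) T,
      y t ≤ (y₀ + Real.sqrt (b / a) * Real.tan (Real.sqrt (a * b) * t)) /
            (1 - Real.sqrt (a / b) * y₀ * Real.tan (Real.sqrt (a * b) * t)) := by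
  set k := Real.sqrt (a / b) with hkdef
  set c := Real.sqrt (a * b) with hcdef
  have hk0 : 0 < k := Real.sqrt_pos.mpr (div_pos ha hb)
  have hc0 : 0 < c := Real.sqrt_pos.mpr (mul_pos ha hb)
  have hkb : k * b = c := by
    have h1 : (k * b) ^ 2 = a * b := by
      rw [hkdef, mul_pow, Real.sq_sqrt (div_pos ha hb).le]
      field_simp
    rw [hcdef, ← h1, Real.sqrt_sq (by positivity)]
  have hca : c * k = a := by
    have h1 : (c * k) ^ 2 = a ^ 2 := by
      rw [hkdef, hcdef, mul_pow, Real.sq_sqrt (mul_pos ha hb).le,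
        Real.sq_sqrt (div_pos ha hb).le]
      field_simp
    have h2 : c * k = Real.sqrt ((c * k) ^ 2) := (Real.sqrt_sq (by positivity)).symm
    rw [h2, h1, Real.sqrt_sq ha.le]
  have hsk : Real.sqrt (b / a) = k⁻¹ := by
    rw [hkdef, ← Real.sqrt_inv, inv_div]
  set α := Real.arctan (k * y₀) with hαdef
  have hα0 : 0 ≤ α := by
    rw [hαdef, ← Real.arctan_zero]
    exact Real.arctan_strictMono.monotone (by positivity)
  have hαlt : α < π / 2 := Real.arctan_lt_pi_div_two _
  -- main smallness: α + c * T < π / 2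
  have hkey : α + c * T < π / 2 := by
    by_cases h0 : y₀ = 0
    · rw [if_pos h0] at hT
      have := (mul_lt_mul_iff_right₀ hc0).mpr hT
      rw [← mul_assoc, mul_inv_cancel₀ hc0.ne', one_mul] at this
      have : c * T < π / 2 := this
      have hα : α = 0 := by rw [hαdef, h0, mul_zero, Real.arctan_zero]
      linarith
    · rw [if_neg h0] at hT
      have hy₀pos : 0 < y₀ := lt_of_le_of_ne hy₀ (Ne.symm h0)
      have hrw : Real.sqrt (b / a) / y₀ = (k * y₀)⁻¹ := by
        rw [hsk, mul_inv]
        ring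
      rw [hrw, Real.arctan_inv_of_pos (by positivity)] at hT
      have := (mul_lt_mul_iff_right₀ hc0).mpr hT
      rw [← mul_assoc, mul_inv_cancel₀ hc0.ne', one_mul] at this
      linarith
  -- the comparison function g
  set g : ℝ → ℝ := fun t => Real.arctan (k * y t) - c * t with hgdef
  have hgderiv : ∀ t ∈ Icc (0:ℝ) T,
      HasDerivAt g (1 / (1 + (k * y t) ^ 2) * (k * y' t) - c) t := by
    intro t ht
    have h1 := ((hderiv t ht).const_mul k).arctan
    have h2 : HasDerivAt (fun s : ℝ => c * s) c t := by
      simpa using (hasDerivAt_id t).const_mul c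
    exact h1.sub h2
  have hganti : AntitoneOn g (Icc 0 T) := by
    apply antitoneOn_of_deriv_nonpos (convex_Icc 0 T)
    · intro t ht
      exact ((hgderiv t ht).continuousAt).continuousWithinAt
    · intro t ht
      rw [interior_Icc] at ht
      exact ((hgderiv t (Ioo_subset_Icc_self ht)).differentiableAt).differentiableWithinAt
    · intro t ht
      rw [interior_Icc] at ht
      have ht' := Ioo_subset_Icc_self ht
      rw [(hgderiv t ht').deriv]
      have hpos : (0:ℝ) < 1 + (k * y t) ^ 2 := by positivity
      have h1 : k * y' t ≤ c * (1 + (k * y t) ^ 2) := by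
        have h2 : k * y' t ≤ k * (a * (y t) ^ 2 + b) :=
          mul_le_mul_of_nonneg_left (hineq t ht') hk0.le
        nlinarith [h2, hkb, hca]
      rw [sub_nonpos, div_mul_eq_mul_div, one_mul, div_le_iff₀ hpos]
      linarith
  intro t ht
  obtain ⟨ht0, htT⟩ := ht
  have h0mem : (0:ℝ) ∈ Icc (0:ℝ) T := ⟨le_refl 0, ht0.trans htT⟩
  have hg : g t ≤ g 0 := hganti h0mem ⟨ht0, htT⟩ ht0
  have hg0 : g 0 = α := by simp [hgdef, hinit, hαdef]
  have hφ : Real.arctan (k * y t) ≤ α + c * t := by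
    have : Real.arctan (k * y t) - c * t ≤ α := hg0 ▸ hg
    linarith
  have hct0 : 0 ≤ c * t := by positivity
  have hctT : c * t ≤ c * T := mul_le_mul_of_nonneg_left htT hc0.le
  have hupper : α + c * t < π / 2 := by linarith
  -- tan bound
  have htan : k * y t ≤ Real.tan (α + c * t) := by
    rcases lt_or_eq_of_le hφ with h | h
    · have := Real.tan_lt_tan_of_lt_of_lt_pi_div_two
        (Real.neg_pi_div_two_lt_arctan (k * y t)) hupper h
      rw [Real.tan_arctan] at this
      linarith
    · rw [← h, Real.tan_arctan]
  -- denominator positivity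
  set τ := Real.tan (c * t) with hτdef
  have hτ0 : 0 ≤ τ := Real.tan_nonneg_of_nonneg_of_le_pi_div_two hct0 (by linarith)
  have hD : 0 < 1 - k * y₀ * τ := by
    by_cases h0 : y₀ = 0
    · rw [h0]; simp
    · have hy₀pos : 0 < y₀ := lt_of_le_of_ne hy₀ (Ne.symm h0)
      have hαpos : 0 < α := by
        rw [hαdef, ← Real.arctan_zero]
        exact Real.arctan_strictMono (by positivity)
      have hτlt : τ < Real.tan (π / 2 - α) := by
        rw [hτdef]
        exact Real.tan_lt_tan_of_lt_of_lt_pi_div_two (by linarith) (by linarith) (by linarith)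
      rw [Real.tan_pi_div_two_sub, hαdef, Real.tan_arctan] at hτlt
      have hky₀ : 0 < k * y₀ := by positivity
      have := (mul_lt_mul_iff_right₀ hky₀).mpr hτlt
      rw [mul_inv_cancel₀ hky₀.ne'] at this
      linarith
  -- tan addition
  have hcosα : Real.cos α ≠ 0 := (Real.cos_arctan_pos _).ne'
  have hcosct : Real.cos (c * t) ≠ 0 := by
    have : 0 < Real.cos (c * t) := Real.cos_pos_of_mem_Ioo ⟨by linarith [Real.pi_pos], by linarith⟩
    exact this.ne'
  have hcossum : Real.cos (α + c * t) ≠ 0 := by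
    have : 0 < Real.cos (α + c * t) := Real.cos_pos_of_mem_Ioo ⟨by linarith [Real.pi_pos], hupper⟩
    exact this.ne'
  have hadd : Real.tan (α + c * t) = (k * y₀ + τ) / (1 - k * y₀ * τ) := by
    rw [tan_add_aux hcosα hcosct hcossum, hαdef, Real.tan_arctan, hτdef]
  rw [hadd] at htan
  -- conclude
  rw [hsk]
  rw [le_div_iff₀ hD]
  have h2 : k * y t * (1 - k * y₀ * τ) ≤ k * y₀ + τ := (le_div_iff₀ hD).mp htan
  have h3 : y t * (1 - k * y₀ * τ) * k ≤ (y₀ + k⁻¹ * τ) * k := by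
    have : (y₀ + k⁻¹ * τ) * k = k * y₀ + τ := by field_simp
    rw [this]
    nlinarith [h2]
  exact le_of_mul_le_mul_right h3 hk0
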